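/- Let π : M → N be a surjective linear map between finite-dimensional real vector spaces, C = M × (ker π)° ⊆ M × M*, and J : C → N × N* the linear map J(m,η) = (π(m), j_π(η)), where j_π(η) is the unique covector with j_π(η) ∘ π = η. Let Λ ⊆ M × M* be a Lagrangian subspace with respect to the canonical symplectic form ω_M, and assume the transversality condition Λ + C = M × M*. Then the restriction of J to Λ ∩ C is injective, and J(Λ ∩ C) is a Lagrangian subspace of (N × N*, ω_N). -/

import Mathlib

/-- The canonical symplectic form `ω((x₁,α₁),(x₂,α₂)) = α₁(x₂) − α₂(x₁)` on `X ⊕ X*`. -/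
noncomputable def canonicalSymplecticForm (X : Type*) [AddCommGroup X] [Module ℝ X] :
    LinearMap.BilinForm ℝ (X × Module.Dual ℝ X) :=
  LinearMap.mk₂ ℝ (fun x y => x.2 y.1 - y.2 x.1)
    (by intro m₁ m₂ n; simp; ring)
    (by intro c m n; simp; ring)
    (by intro m n₁ n₂; simp; ring)
    (by intro c m n; simp; ring)

/-- The orthogonal complement of a subspace of `X ⊕ X*` with respect to the canonical
symplectic form; a subspace is Lagrangian when it coincides with its orthogonal. -/
noncomputable def sympOrthogonal (X : Type*) [AddCommGroup X] [Module ℝ X]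
    (S : Submodule ℝ (X × Module.Dual ℝ X)) : Submodule ℝ (X × Module.Dual ℝ X) :=
  LinearMap.BilinForm.orthogonal (canonicalSymplecticForm X) S

/-- The forward image `F_φ(D_U) = {(φ(u), β) | u ∈ U, β ∈ V*, (u, β ∘ φ) ∈ D_U}`
of a subspace `D_U ⊆ U ⊕ U*` under a linear map `φ : U → V`. -/
noncomputable def forwardImage {U V : Type*} [AddCommGroup U] [Module ℝ U]
    [AddCommGroup V] [Module ℝ V] (φ : U →ₗ[ℝ] V)
    (D : Submodule ℝ (U × Module.Dual ℝ U)) : Submodule ℝ (V × Module.Dual ℝ V) where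
  carrier := {p | ∃ u : U, p.1 = φ u ∧ (u, p.2.comp φ) ∈ D}
  add_mem' := by
    rintro ⟨v₁, β₁⟩ ⟨v₂, β₂⟩ ⟨u₁, h₁, hD₁⟩ ⟨u₂, h₂, hD₂⟩
    refine ⟨u₁ + u₂, by simp at h₁ h₂; simp [h₁, h₂], ?_⟩
    simpa [LinearMap.add_comp] using D.add_mem hD₁ hD₂
  zero_mem' := ⟨0, by simp, by simp; exact D.zero_mem⟩
  smul_mem' := by
    rintro c ⟨v, β⟩ ⟨u, h, hD⟩
    refine ⟨c • u, by simp at h; simp [h], ?_⟩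
    simpa [LinearMap.smul_comp] using D.smul_mem c hD


/-!
The subspace `C = M × (ker π)°` is coisotropic with characteristic `C^ω = K = ker π × 0`, and `J`
is the symplectic reduction `C → C / K ≅ N × N*`. For Lagrangian `Λ` this gives
`(Λ ∩ C)^ω = Λ^ω + C^ω = Λ + K`. The kernel of `J` on `Λ ∩ C` is `Λ ∩ K ⊆ (Λ + C)^ω`, which
transversality makes zero. Since `J` pulls `ω_N` back to `ω_M`, the image `J(Λ ∩ C)` is isotropic;
conversely a point of `N × N*` orthogonal to it lifts to an element of `(Λ ∩ C)^ω = Λ + K`, and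
removing its `K`-component leaves an element of `Λ ∩ C` with the same image.
-/

open Module (Dual)

namespace LinearMap.BilinForm

section CommRing

variable {R M : Type*} [CommRing R] [AddCommGroup M] [Module R M] {B : LinearMap.BilinForm R M}

theorem orthogonal_sup (N L : Submodule R M) :
    B.orthogonal (N ⊔ L) = B.orthogonal N ⊓ B.orthogonal L := by
  refine le_antisymm (le_inf (orthogonal_le le_sup_left) (orthogonal_le le_sup_right)) ?_
  rintro x ⟨hN, hL⟩ z hz
  obtain ⟨n, hn, l, hl, rfl⟩ := Submodule.mem_sup.mp hz
  simp [(hN n hn : B n x = 0), (hL l hl : B l x = 0)]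

theorem orthogonal_inf_orthogonal_eq_bot (hB : B.Nondegenerate) {N L : Submodule R M}
    (h : N ⊔ L = ⊤) : B.orthogonal N ⊓ B.orthogonal L = ⊥ := by
  rw [← orthogonal_sup, h, orthogonal_top_eq_bot hB]

end CommRing

theorem orthogonal_inf_orthogonal {K V : Type*} [Field K] [AddCommGroup V] [Module K V]
    [FiniteDimensional K V] {B : LinearMap.BilinForm K V} (hB : B.Nondegenerate) (hB₀ : B.IsRefl)
    (N L : Submodule K V) : B.orthogonal (B.orthogonal N ⊓ B.orthogonal L) = N ⊔ L := by
  rw [← orthogonal_sup, orthogonal_orthogonal hB hB₀]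

end LinearMap.BilinForm

open LinearMap LinearMap.BilinForm

section Symplectic

variable {X : Type*} [AddCommGroup X] [Module ℝ X]

@[simp]
theorem canonicalSymplecticForm_apply (x y : X × Dual ℝ X) :
    canonicalSymplecticForm X x y = x.2 y.1 - y.2 x.1 :=
  rfl

theorem canonicalSymplecticForm_isRefl : (canonicalSymplecticForm X).IsRefl := by
  intro x y h
  simp only [canonicalSymplecticForm_apply] at h ⊢
  linarith

theorem canonicalSymplecticForm_nondegenerate : (canonicalSymplecticForm X).Nondegenerate := by
  refine (IsRefl.nondegenerate_iff_separatingLeft (B := canonicalSymplecticForm X)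
    canonicalSymplecticForm_isRefl).mpr fun x hx ↦ ?_
  have hsnd : x.2 = 0 := LinearMap.ext fun a ↦ by simpa using hx (a, 0)
  have hfst : x.1 = 0 := (Module.forall_dual_apply_eq_zero_iff ℝ x.1).mp fun f ↦ by
    simpa [hsnd] using hx (0, f)
  exact Prod.ext hfst hsnd

end Symplectic

section Reduction

variable {U V : Type*} [AddCommGroup U] [Module ℝ U] [AddCommGroup V] [Module ℝ V]

def reductionSubspace (φ : U →ₗ[ℝ] V) : Submodule ℝ (U × Dual ℝ U) :=
  (⊤ : Submodule ℝ U).prod (ker φ).dualAnnihilator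

def characteristicSubspace (φ : U →ₗ[ℝ] V) : Submodule ℝ (U × Dual ℝ U) :=
  (ker φ).prod ⊥

theorem comp_mem_reductionSubspace (φ : U →ₗ[ℝ] V) (u : U) (γ : Dual ℝ V) :
    (u, γ.comp φ) ∈ reductionSubspace φ :=
  ⟨trivial, φ.range_dualMap_le_dualAnnihilator_ker ⟨γ, rfl⟩⟩

theorem sympOrthogonal_characteristicSubspace (φ : U →ₗ[ℝ] V) :
    sympOrthogonal U (characteristicSubspace φ) = reductionSubspace φ := by
  ext ⟨u, η⟩
  simp only [sympOrthogonal, mem_orthogonal_iff, characteristicSubspace,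
    reductionSubspace, Submodule.mem_prod, Submodule.mem_top, true_and,
    Submodule.mem_dualAnnihilator, Submodule.mem_bot, Prod.forall, canonicalSymplecticForm_apply]
  constructor
  · intro h k hk
    simpa using h k 0 ⟨hk, rfl⟩
  · rintro h k _ ⟨hk, rfl⟩
    simp [h k hk]

theorem characteristicSubspace_le_sympOrthogonal (φ : U →ₗ[ℝ] V) :
    characteristicSubspace φ ≤ sympOrthogonal U (reductionSubspace φ) := by
  rw [← sympOrthogonal_characteristicSubspace]
  exact le_orthogonal_orthogonal canonicalSymplecticForm_isRefl

theorem inf_characteristicSubspace_eq_bot {φ : U →ₗ[ℝ] V} {Λ : Submodule ℝ (U × Dual ℝ U)}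
    (hΛ : Λ ≤ sympOrthogonal U Λ) (htrans : Λ ⊔ reductionSubspace φ = ⊤) :
    Λ ⊓ characteristicSubspace φ = ⊥ := by
  refine eq_bot_iff.mpr <| le_trans ?_
    (orthogonal_inf_orthogonal_eq_bot canonicalSymplecticForm_nondegenerate htrans).le
  exact inf_le_inf hΛ (characteristicSubspace_le_sympOrthogonal φ)

theorem sympOrthogonal_inf_reductionSubspace [FiniteDimensional ℝ U] (φ : U →ₗ[ℝ] V)
    {Λ : Submodule ℝ (U × Dual ℝ U)} (hΛ : Λ = sympOrthogonal U Λ) :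
    sympOrthogonal U (Λ ⊓ reductionSubspace φ) = Λ ⊔ characteristicSubspace φ := by
  conv_lhs => rw [hΛ, ← sympOrthogonal_characteristicSubspace φ]
  exact orthogonal_inf_orthogonal canonicalSymplecticForm_nondegenerate
    canonicalSymplecticForm_isRefl _ _

theorem canonicalSymplecticForm_map (φ : U →ₗ[ℝ] V) (u v : U) (β γ : Dual ℝ V) :
    canonicalSymplecticForm V (φ u, β) (φ v, γ) =
      canonicalSymplecticForm U (u, β.comp φ) (v, γ.comp φ) :=
  rfl

theorem forwardImage_le_sympOrthogonal (φ : U →ₗ[ℝ] V) {D : Submodule ℝ (U × Dual ℝ U)}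
    (hD : D ≤ sympOrthogonal U D) :
    forwardImage φ D ≤ sympOrthogonal V (forwardImage φ D) := by
  rintro ⟨_, β⟩ ⟨u, rfl, hu⟩ ⟨_, γ⟩ ⟨v, rfl, hv⟩
  simp only [canonicalSymplecticForm_map]
  exact hD hu _ hv

theorem mem_sympOrthogonal_of_mem_sympOrthogonal_forwardImage {φ : U →ₗ[ℝ] V}
    (hφ : Function.Surjective φ) {D : Submodule ℝ (U × Dual ℝ U)}
    (hD : D ≤ reductionSubspace φ) {u : U} {γ : Dual ℝ V}
    (h : (φ u, γ) ∈ sympOrthogonal V (forwardImage φ D)) :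
    (u, γ.comp φ) ∈ sympOrthogonal U D := by
  rintro ⟨v, δ⟩ hv
  obtain ⟨β, rfl⟩ : δ ∈ range φ.dualMap := by
    rw [range_dualMap_eq_dualAnnihilator_ker_of_surjective φ hφ]
    exact (hD hv).2
  exact h (φ v, β) ⟨v, rfl, hv⟩

theorem sympOrthogonal_forwardImage_le [FiniteDimensional ℝ U] {φ : U →ₗ[ℝ] V}
    (hφ : Function.Surjective φ) {Λ : Submodule ℝ (U × Dual ℝ U)}
    (hΛ : Λ = sympOrthogonal U Λ) :
    sympOrthogonal V (forwardImage φ (Λ ⊓ reductionSubspace φ)) ≤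
      forwardImage φ (Λ ⊓ reductionSubspace φ) := by
  rintro ⟨n, γ⟩ h
  obtain ⟨u, rfl⟩ := hφ n
  have hlift := mem_sympOrthogonal_of_mem_sympOrthogonal_forwardImage hφ inf_le_right h
  rw [sympOrthogonal_inf_reductionSubspace φ hΛ] at hlift
  obtain ⟨l, hl, k, ⟨hk, hk0⟩, hlk⟩ := Submodule.mem_sup.mp hlift
  have hl_eq : l = (u - k.1, γ.comp φ) := by
    rw [eq_sub_of_add_eq hlk]
    ext <;> simp [(Submodule.mem_bot ℝ).mp hk0]
  refine ⟨u - k.1, by simp [mem_ker.mp hk], ?_, comp_mem_reductionSubspace φ _ _⟩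
  exact hl_eq ▸ hl

theorem forwardImage_eq_sympOrthogonal [FiniteDimensional ℝ U] {φ : U →ₗ[ℝ] V}
    (hφ : Function.Surjective φ) {Λ : Submodule ℝ (U × Dual ℝ U)}
    (hΛ : Λ = sympOrthogonal U Λ) :
    forwardImage φ (Λ ⊓ reductionSubspace φ) =
      sympOrthogonal V (forwardImage φ (Λ ⊓ reductionSubspace φ)) := by
  refine le_antisymm (forwardImage_le_sympOrthogonal φ ?_) (sympOrthogonal_forwardImage_le hφ hΛ)
  calc Λ ⊓ reductionSubspace φ ≤ Λ := inf_le_left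
    _ = sympOrthogonal U Λ := hΛ
    _ ≤ sympOrthogonal U (Λ ⊓ reductionSubspace φ) := orthogonal_le inf_le_left

end Reduction

theorem lagrangian_reduction_by_morse_family_general
    {M N : Type*} [AddCommGroup M] [Module ℝ M] [FiniteDimensional ℝ M]
    [AddCommGroup N] [Module ℝ N]
    (π : M →ₗ[ℝ] N) (hπ : Function.Surjective π)
    (Λ : Submodule ℝ (M × Module.Dual ℝ M))
    (hΛ : Λ = sympOrthogonal M Λ)
    (htrans : Λ ⊔ (⊤ : Submodule ℝ M).prod (LinearMap.ker π).dualAnnihilator = ⊤) :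
    (∀ x ∈ Λ ⊓ (⊤ : Submodule ℝ M).prod (LinearMap.ker π).dualAnnihilator,
      ∀ y ∈ Λ ⊓ (⊤ : Submodule ℝ M).prod (LinearMap.ker π).dualAnnihilator,
        ∀ p q : N × Module.Dual ℝ N,
          p.1 = π x.1 → p.2.comp π = x.2 →
          q.1 = π y.1 → q.2.comp π = y.2 → p = q → x = y) ∧
    forwardImage π (Λ ⊓ (⊤ : Submodule ℝ M).prod (LinearMap.ker π).dualAnnihilator) =
      sympOrthogonal N
        (forwardImage π
          (Λ ⊓ (⊤ : Submodule ℝ M).prod (LinearMap.ker π).dualAnnihilator)) := by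
  refine ⟨?_, forwardImage_eq_sympOrthogonal hπ hΛ⟩
  rintro x hx y hy p _ hp₁ hp₂ hq₁ hq₂ rfl
  have hdiff : x - y ∈ Λ ⊓ characteristicSubspace π := by
    refine ⟨Λ.sub_mem hx.1 hy.1, ?_, ?_⟩
    · simp [← hp₁, ← hq₁]
    · simp [← hp₂, ← hq₂]
  rw [inf_characteristicSubspace_eq_bot hΛ.le htrans, Submodule.mem_bot] at hdiff
  exact sub_eq_zero.mp hdiff

/-- (Linear model of a Morse family generating a Lagrangian immersion.)
Let `π : M → N` be surjective linear, `C = M × (ker π)° ⊆ M ⊕ M*`, and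
`J : C → N ⊕ N*`, `J(m,η) = (π m, j_π η)`, where `j_π η` is the unique covector `β`
with `β ∘ π = η`.  If `Λ ⊆ M ⊕ M*` is Lagrangian for `ω_M` and `Λ + C = M ⊕ M*`,
then `J` is injective on `Λ ∩ C` (stated below via the characterization
`p = J x ↔ p.1 = π x.1 ∧ p.2 ∘ π = x.2` for `x ∈ C`), and the image
`J(Λ ∩ C) = {(π m, β) | (m, β∘π) ∈ Λ ∩ C} = forwardImage π (Λ ⊓ C)` is a Lagrangian
subspace of `(N ⊕ N*, ω_N)`. -/
theorem lagrangian_reduction_by_morse_family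
    {M N : Type*} [AddCommGroup M] [Module ℝ M] [FiniteDimensional ℝ M]
    [AddCommGroup N] [Module ℝ N] [FiniteDimensional ℝ N]
    (π : M →ₗ[ℝ] N) (hπ : Function.Surjective π)
    (Λ : Submodule ℝ (M × Module.Dual ℝ M))
    (hΛ : Λ = sympOrthogonal M Λ)
    (htrans : Λ ⊔ (⊤ : Submodule ℝ M).prod (LinearMap.ker π).dualAnnihilator = ⊤) :
    (∀ x ∈ Λ ⊓ (⊤ : Submodule ℝ M).prod (LinearMap.ker π).dualAnnihilator,
      ∀ y ∈ Λ ⊓ (⊤ : Submodule ℝ M).prod (LinearMap.ker π).dualAnnihilator,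
        ∀ p q : N × Module.Dual ℝ N,
          p.1 = π x.1 → p.2.comp π = x.2 →
          q.1 = π y.1 → q.2.comp π = y.2 → p = q → x = y) ∧
    forwardImage π (Λ ⊓ (⊤ : Submodule ℝ M).prod (LinearMap.ker π).dualAnnihilator) =
      sympOrthogonal N
        (forwardImage π
          (Λ ⊓ (⊤ : Submodule ℝ M).prod (LinearMap.ker π).dualAnnihilator)) :=
  lagrangian_reduction_by_morse_family_general π hπ Λ hΛ htrans
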